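/- arXiv:2605.19694 — 3 statements merged into one kernel-verified Lean document; each statement's English description precedes it below -/
import Mathlib

section
/- For every integer k ≥ 1, every metric space (X, dist), every ε > 0 and all points x_1, …, x_k ∈ X, the k-th cumulant of the exclusion satisfies the tree inequality: |φ_k(x_1, …, x_k)| ≤ Σ_{T tree on {1,…,k}} ∏_{{i,j} ∈ E_T} 1_{dist(x_i,x_j) ≤ ε}, where the sum on the right runs over all trees on the vertex set {1,…,k}. -/
/-!
Let `H` be the graph of `ε`-close pairs, so that `φ_k` is the sum of `(-1)^|E(G)|` over connected
`G ≤ H` and the right-hand side counts the trees `T ≤ H`. Fix an injective weighting of the edges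
and send `G` to the spanning tree chosen by Kruskal's algorithm: keep an edge iff its endpoints are
not already joined by lighter edges of `G`. If the fibre of a tree `T` contains some `G₀ ≠ T`, an
edge `e` of `G₀` outside `T` has its endpoints joined by lighter edges of `T`; toggling `e`
preserves the fibre and flips the sign, so the fibre sums to zero. Every fibre therefore
contributes at most `1` in absolute value.
-/

open scoped Classical

/-- The indicator `1_{dist(x_i, x_j) ≤ ε}`, as a function of an unordered pair `{i, j}`. -/
noncomputable def exclIndicator {k : ℕ} {X : Type*} [MetricSpace X]
    (x : Fin k → X) (ε : ℝ) : Sym2 (Fin k) → ℝ :=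
  Sym2.lift ⟨fun i j => if dist (x i) (x j) ≤ ε then (1 : ℝ) else 0,
    fun i j => by simp [dist_comm]⟩

/-- The `k`-th cumulant of the exclusion:
`φ_k(x_1,…,x_k) = Σ_{G connected graph on {1,…,k}} ∏_{{i,j} ∈ E_G} (−1_{dist(x_i,x_j) ≤ ε})`. -/
noncomputable def exclCumulant {X : Type*} [MetricSpace X]
    (k : ℕ) (x : Fin k → X) (ε : ℝ) : ℝ :=
  ∑ G : SimpleGraph (Fin k),
    if G.Connected then ∏ e ∈ G.edgeFinset, (-(exclIndicator x ε e)) else 0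

namespace SimpleGraph

open Finset
open scoped symmDiff

variable {V : Type*}

theorem Reachable.of_forall_adj {G G' : SimpleGraph V} {u v : V} (huv : G.Reachable u v)
    (h : ∀ ⦃a b⦄, G.Adj a b → G'.Reachable a b) : G'.Reachable u v := by
  rw [reachable_iff_reflTransGen] at huv ⊢
  exact Relation.reflTransGen_closed (fun a b hab => (reachable_iff_reflTransGen a b).1 (h hab))
    _ _ huv

section Kruskal

variable (w : Sym2 V → ℕ)

def weightBelow (G : SimpleGraph V) (n : ℕ) : SimpleGraph V where
  Adj a b := G.Adj a b ∧ w s(a, b) < n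
  symm := ⟨fun a b h => ⟨h.1.symm, by rw [Sym2.eq_swap]; exact h.2⟩⟩
  loopless := ⟨fun a h => G.irrefl h.1⟩

def kruskal (G : SimpleGraph V) : SimpleGraph V where
  Adj a b := G.Adj a b ∧ ¬(G.weightBelow w (w s(a, b))).Reachable a b
  symm := ⟨fun a b h => ⟨h.1.symm, by rw [Sym2.eq_swap]; exact fun hr => h.2 hr.symm⟩⟩
  loopless := ⟨fun a h => G.irrefl h.1⟩

variable {w} {G G' : SimpleGraph V} {a b c d u v : V} {m n : ℕ}

@[simp]
theorem kruskal_adj :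
    (G.kruskal w).Adj a b ↔ G.Adj a b ∧ ¬(G.weightBelow w (w s(a, b))).Reachable a b := Iff.rfl

theorem weightBelow_le : G.weightBelow w n ≤ G := fun _ _ h => h.1

theorem weightBelow_mono (h : G ≤ G') (hmn : m ≤ n) : G.weightBelow w m ≤ G'.weightBelow w n :=
  fun _ _ hab => ⟨h hab.1, hab.2.trans_le hmn⟩

theorem kruskal_le : G.kruskal w ≤ G := fun _ _ h => h.1

theorem reachable_kruskal_weightBelow_of_adj (h : G.Adj a b) :
    ((G.kruskal w).weightBelow w (w s(a, b) + 1)).Reachable a b := by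
  induction hn : w s(a, b) using Nat.strong_induction_on generalizing a b with
  | _ n ih =>
  by_cases hr : (G.weightBelow w n).Reachable a b
  · refine hr.of_forall_adj fun c d hcd => ?_
    have hlt := hcd.2
    exact (ih _ (hn ▸ hlt) hcd.1 rfl).mono (weightBelow_mono le_rfl (by omega))
  · exact Adj.reachable ⟨⟨h, hn ▸ hr⟩, hn ▸ Nat.lt_succ_self n⟩

theorem Reachable.kruskal_weightBelow (h : (G.weightBelow w n).Reachable u v) :
    ((G.kruskal w).weightBelow w n).Reachable u v :=
  h.of_forall_adj fun _ _ hab =>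
    (reachable_kruskal_weightBelow_of_adj hab.1).mono (weightBelow_mono le_rfl hab.2)

theorem Reachable.kruskal (h : G.Reachable u v) : (G.kruskal w).Reachable u v :=
  h.of_forall_adj fun _ _ hab =>
    (reachable_kruskal_weightBelow_of_adj hab).mono weightBelow_le

theorem Connected.kruskal (h : G.Connected) : (G.kruskal w).Connected :=
  (connected_iff _).2 ⟨fun u v => (h.preconnected u v).kruskal, h.nonempty⟩

/-- The heaviest edge `s(a, b)` of a cycle of `G.kruskal w` would have its endpoints joined by the
rest of the cycle, which consists of lighter edges. -/
theorem kruskal_isAcyclic (hw : Function.Injective w) : (G.kruskal w).IsAcyclic := by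
  intro u p hp
  have hne : p.edges.toFinset.Nonempty :=
    List.toFinset_nonempty_iff _ |>.2 (Walk.edges_eq_nil.not.2 hp.not_nil)
  obtain ⟨f, hf, hmax⟩ := p.edges.toFinset.exists_max_image w hne
  rw [List.mem_toFinset] at hf
  set C := fromEdgeSet {e | e ∈ p.edges}
  have hpC : ∀ e ∈ p.edges, e ∈ C.edgeSet := fun e he => by
    rw [edgeSet_fromEdgeSet]
    exact ⟨he, (G.kruskal w).not_isDiag_of_mem_edgeSet (p.edges_subset_edgeSet he)⟩
  induction f using Sym2.ind with | _ a b =>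
  have hab := p.adj_of_mem_edges hf
  obtain ⟨-, hr⟩ := adj_and_reachable_delete_edges_iff_exists_cycle.2
    ⟨u, p.transfer C hpC, hp.transfer hpC, by rwa [Walk.edges_transfer]⟩
  refine hab.2 (hr.mono fun x y hxy => ?_)
  rw [deleteEdges_adj, fromEdgeSet_adj, Set.mem_singleton_iff] at hxy
  obtain ⟨⟨hxy, -⟩, hne⟩ := hxy
  refine ⟨(kruskal_le (p.adj_of_mem_edges hxy)), ?_⟩
  exact (hmax _ (List.mem_toFinset.2 hxy)).lt_of_ne (hw.ne hne)

theorem Reachable.of_sym2_eq (h : G.Reachable c d) (he : s(c, d) = s(a, b)) : G.Reachable a b := by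
  rcases Sym2.eq_iff.1 he with ⟨rfl, rfl⟩ | ⟨rfl, rfl⟩
  exacts [h, h.symm]

section SupEdge

variable (h₁ : G ≤ G') (h₂ : G' ≤ G ⊔ edge c d)
  (hr : (G.weightBelow w (w s(c, d))).Reachable c d)
include h₁ h₂ hr

theorem reachable_weightBelow_iff_of_le_sup_edge :
    (G'.weightBelow w n).Reachable u v ↔ (G.weightBelow w n).Reachable u v := by
  refine ⟨fun h => h.of_forall_adj fun x y hxy => ?_, fun h => h.mono (weightBelow_mono h₁ le_rfl)⟩
  rcases h₂ hxy.1 with hG | he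
  · exact Adj.reachable ⟨hG, hxy.2⟩
  · obtain ⟨he, -⟩ := (adj_edge _ _).1 he
    exact (hr.mono (weightBelow_mono le_rfl (he ▸ hxy.2).le)).of_sym2_eq he

theorem kruskal_eq_of_le_sup_edge : G'.kruskal w = G.kruskal w := by
  ext a b
  simp only [kruskal_adj, reachable_weightBelow_iff_of_le_sup_edge h₁ h₂ hr]
  by_cases he : s(c, d) = s(a, b)
  · have : (G.weightBelow w (w s(a, b))).Reachable a b := he ▸ hr |>.of_sym2_eq he
    simp [this]
  · have hadj : G'.Adj a b ↔ G.Adj a b :=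
      ⟨fun h => (h₂ h).resolve_right fun h' => he ((adj_edge _ _).1 h').1, fun h => h₁ h⟩
    rw [hadj]

end SupEdge

theorem kruskal_symmDiff_edge (hr : (G.weightBelow w (w s(c, d))).Reachable c d) :
    (G ∆ edge c d).kruskal w = G.kruskal w := by
  have hr' : ((G \ edge c d).weightBelow w (w s(c, d))).Reachable c d :=
    hr.mono fun x y (hxy : (G.weightBelow w _).Adj x y) =>
      ⟨⟨hxy.1, fun he => hxy.2.ne (congrArg w ((adj_edge _ _).1 he).1).symm⟩, hxy.2⟩
  have hsup : G ∆ edge c d ≤ G \ edge c d ⊔ edge c d := by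
    rw [symmDiff_def]
    exact sup_le_sup_left sdiff_le _
  rw [kruskal_eq_of_le_sup_edge (symmDiff_def G _ ▸ le_sup_left) hsup hr',
    kruskal_eq_of_le_sup_edge sdiff_le (le_sup_left.trans_eq (sdiff_sup_self _ _).symm) hr']

end Kruskal

section Sign

variable [Fintype V] {R : Type*} [Ring R] {G : SimpleGraph V} {c d : V}

theorem neg_one_pow_card_edgeFinset_symmDiff_edge (hcd : c ≠ d) :
    (-1 : R) ^ #(G ∆ edge c d).edgeFinset = -(-1) ^ #G.edgeFinset := by
  have hadd : ∀ G : SimpleGraph V, ¬G.Adj c d →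
      (-1 : R) ^ #(G ∆ edge c d).edgeFinset = -(-1) ^ #G.edgeFinset := fun G h => by
    have hcard : #(G ∆ edge c d).edgeFinset = #G.edgeFinset + 1 := by
      convert G.card_edgeFinset_sup_edge h hcd using 3
      exact ((G.disjoint_edge).2 h).symmDiff_eq_sup
    rw [hcard, pow_succ, mul_neg_one]
  by_cases h : G.Adj c d
  · have h' : ¬(G ∆ edge c d).Adj c d := by simp [symmDiff_def, h, edge_adj, hcd]
    rw [← neg_neg ((-1 : R) ^ #(G ∆ edge c d).edgeFinset), ← hadd _ h',
      symmDiff_symmDiff_cancel_right]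
  · exact hadd G h

theorem sum_neg_one_pow_card_edgeFinset_eq_zero (s : Finset (SimpleGraph V)) (hcd : c ≠ d)
    (hs : ∀ G ∈ s, G ∆ edge c d ∈ s) : ∑ G ∈ s, (-1 : R) ^ #G.edgeFinset = 0 := by
  refine sum_involution (fun G _ => G ∆ edge c d) (fun G _ => ?_) (fun G _ _ => ?_)
    (fun G hG => hs G hG) (fun G _ => symmDiff_symmDiff_cancel_right _ _)
  · rw [neg_one_pow_card_edgeFinset_symmDiff_edge hcd, add_neg_cancel]
  · rw [Ne, symmDiff_eq_left]
    exact fun he => by simpa [hcd, edge_adj] using congrArg (Adj · c d) he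

end Sign

section Count

variable [Fintype V] [DecidableEq V]

theorem abs_sum_kruskal_fiber_le_one (w : Sym2 V → ℕ) (H T : SimpleGraph V) :
    |∑ G ∈ {G | G.Connected ∧ G ≤ H} with G.kruskal w = T, (-1 : ℝ) ^ #G.edgeFinset| ≤ 1 := by
  set s : Finset (SimpleGraph V) := {G ∈ {G | G.Connected ∧ G ≤ H} | G.kruskal w = T}
  by_cases hs : ∃ G ∈ s, G ≠ T
  · obtain ⟨G₀, hG₀, hne⟩ := hs
    simp only [s, mem_filter, mem_univ, true_and] at hG₀
    obtain ⟨⟨-, hG₀H⟩, hG₀T⟩ := hG₀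
    obtain ⟨c, d, hG₀cd, hTcd⟩ : ∃ c d, G₀.Adj c d ∧ ¬T.Adj c d := by
      by_contra! h
      exact hne (le_antisymm h (hG₀T ▸ kruskal_le))
    have hr : (T.weightBelow w (w s(c, d))).Reachable c d := by
      have hr₀ : (G₀.weightBelow w (w s(c, d))).Reachable c d :=
        by_contra fun h => hTcd (hG₀T ▸ ⟨hG₀cd, h⟩)
      exact hG₀T ▸ hr₀.kruskal_weightBelow
    have hclosed : ∀ G ∈ s, G ∆ edge c d ∈ s := by
      intro G hG
      simp only [s, mem_filter, mem_univ, true_and] at hG ⊢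
      obtain ⟨⟨hGconn, hGH⟩, hGT⟩ := hG
      have hk : (G ∆ edge c d).kruskal w = T := by
        rw [kruskal_symmDiff_edge (hr.mono (weightBelow_mono (hGT ▸ kruskal_le) le_rfl)), hGT]
      refine ⟨⟨(hGT ▸ hGconn.kruskal).mono (hk ▸ kruskal_le), ?_⟩, hk⟩
      exact symmDiff_le_sup.trans (sup_le hGH ((edge_le_iff _).2 (Or.inr (hG₀H hG₀cd))))
    rw [sum_neg_one_pow_card_edgeFinset_eq_zero s hG₀cd.ne hclosed, abs_zero]
    exact zero_le_one
  · have hsT : s ⊆ {T} := fun G hG => mem_singleton.2 (not_not.1 fun h => hs ⟨G, hG, h⟩)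
    rcases subset_singleton_iff.1 hsT with h | h
    all_goals simp [s, h]

theorem abs_sum_connected_le_card_isTree (H : SimpleGraph V) :
    |∑ G with G.Connected ∧ G ≤ H, (-1 : ℝ) ^ #G.edgeFinset| ≤ #{T | T.IsTree ∧ T ≤ H} := by
  obtain ⟨w, hw⟩ := exists_injective_nat (Sym2 V)
  have hmaps : ∀ G ∈ ({G | G.Connected ∧ G ≤ H} : Finset _),
      G.kruskal w ∈ ({T | T.IsTree ∧ T ≤ H} : Finset _) := by
    simp only [mem_filter, mem_univ, true_and]
    exact fun G ⟨hG, hGH⟩ => ⟨⟨hG.kruskal, kruskal_isAcyclic hw⟩, kruskal_le.trans hGH⟩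
  rw [← sum_fiberwise_of_maps_to hmaps]
  calc _ ≤ ∑ T with T.IsTree ∧ T ≤ H, |∑ G ∈ {G | G.Connected ∧ G ≤ H} with G.kruskal w = T,
        (-1 : ℝ) ^ #G.edgeFinset| := abs_sum_le_sum_abs _ _
    _ ≤ ∑ T with T.IsTree ∧ T ≤ H, 1 := sum_le_sum fun T _ => abs_sum_kruskal_fiber_le_one w H T
    _ = _ := by simp

end Count

end SimpleGraph

section Exclusion

open Finset

variable {k : ℕ} {X : Type*} [MetricSpace X]

def exclusionGraph {ι : Type*} (x : ι → X) (ε : ℝ) : SimpleGraph ι where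
  Adj i j := i ≠ j ∧ dist (x i) (x j) ≤ ε
  symm := ⟨fun i j h => ⟨h.1.symm, dist_comm (x i) (x j) ▸ h.2⟩⟩
  loopless := ⟨fun _ h => h.1 rfl⟩

theorem prod_exclIndicator (x : Fin k → X) (ε : ℝ) (G : SimpleGraph (Fin k)) :
    ∏ e ∈ G.edgeFinset, exclIndicator x ε e = if G ≤ exclusionGraph x ε then 1 else 0 := by
  split_ifs with h
  · refine prod_eq_one fun e he => ?_
    induction e using Sym2.ind with | _ i j =>
    simp [exclIndicator, (h (G.mem_edgeFinset.1 he)).2]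
  · obtain ⟨i, j, hij, hx⟩ : ∃ i j, G.Adj i j ∧ ¬(exclusionGraph x ε).Adj i j := by
      by_contra! h'
      exact h h'
    refine prod_eq_zero (i := s(i, j)) (G.mem_edgeFinset.2 hij) ?_
    have hd : ¬dist (x i) (x j) ≤ ε := fun hd => hx ⟨hij.ne, hd⟩
    simp [exclIndicator, hd]

theorem exclCumulant_eq_sum (x : Fin k → X) (ε : ℝ) :
    exclCumulant k x ε =
      ∑ G with G.Connected ∧ G ≤ exclusionGraph x ε, (-1 : ℝ) ^ #G.edgeFinset := by
  rw [exclCumulant, sum_filter]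
  refine sum_congr rfl fun G _ => ?_
  rw [prod_neg, prod_exclIndicator]
  split_ifs <;> simp_all

theorem sum_isTree_prod_exclIndicator (x : Fin k → X) (ε : ℝ) :
    (∑ T : SimpleGraph (Fin k),
        if T.IsTree then ∏ e ∈ T.edgeFinset, exclIndicator x ε e else 0) =
      #{T | T.IsTree ∧ T ≤ exclusionGraph x ε} := by
  simp only [prod_exclIndicator, ← ite_and, sum_boole]

end Exclusion

theorem tree_inequality_general {X : Type*} [MetricSpace X] (k : ℕ)
    (ε : ℝ) (x : Fin k → X) :
    |exclCumulant k x ε| ≤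
      ∑ T : SimpleGraph (Fin k),
        if T.IsTree then ∏ e ∈ T.edgeFinset, exclIndicator x ε e else 0 := by
  rw [exclCumulant_eq_sum, sum_isTree_prod_exclIndicator]
  exact SimpleGraph.abs_sum_connected_le_card_isTree _

/-- **Tree inequality** for the cumulants of the exclusion: for every `k ≥ 1`,
`|φ_k(x_1,…,x_k)| ≤ Σ_{T tree on {1,…,k}} ∏_{{i,j} ∈ E_T} 1_{dist(x_i,x_j) ≤ ε}`. -/
theorem tree_inequality {X : Type*} [MetricSpace X] (k : ℕ) (hk : 1 ≤ k)
    (ε : ℝ) (hε : 0 < ε) (x : Fin k → X) :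
    |exclCumulant k x ε| ≤
      ∑ T : SimpleGraph (Fin k),
        if T.IsTree then ∏ e ∈ T.edgeFinset, exclIndicator x ε e else 0 :=
  tree_inequality_general k ε x
end

section
/- For every integer n ≥ 1 and every family of real numbers a = (a_{ij})_{1 ≤ i < j ≤ n}, one has the identity ∏_{1 ≤ i < j ≤ n} (1 − a_{ij}) = Σ_{σ partition of {1,…,n}} ∏_{B block of σ} φ_B(a), where for each nonempty subset B ⊆ {1,…,n} the cluster value is φ_B(a) := Σ_{G connected simple graph with vertex set B} ∏_{{i,j} ∈ E_G} (−a_{ij}) (so φ_B(a) = 1 when B is a singleton). The sum on the right runs over all set partitions of {1,…,n} into nonempty blocks. -/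
/-!
Expanding the product gives `∏ (1 - a e) = ∑_G ∏_{e ∈ G} (-a e)` over all graphs `G` on the
vertex set. Group the graphs by their partition into connected components: the graphs whose
component partition is `σ` correspond, by restriction to the blocks and gluing back, to families
of connected graphs on the blocks of `σ`, and the weight `∏_{e ∈ G} (-a e)` is multiplicative
along this correspondence.
-/

open scoped Classical

/-- The cluster value `φ_B(a) = Σ_{G connected graph on B} ∏_{{i,j} ∈ E_G} (−a_{ij})`
attached to a subset `B ⊆ {1,…,n}` and a family `a` indexed by unordered pairs. -/
noncomputable def clusterValue {n : ℕ} (a : Sym2 (Fin n) → ℝ) (B : Finset (Fin n)) : ℝ :=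
  ∑ G : SimpleGraph B,
    if G.Connected then ∏ e ∈ G.edgeFinset, (-(a (e.map Subtype.val))) else 0

open Finset

namespace Finpartition

variable {α : Type*} [DecidableEq α] {s : Finset α}

theorem parts_eq_image_part (P : Finpartition s) : P.parts = s.image P.part := by
  ext B
  refine ⟨fun hB => ?_, fun hB => ?_⟩
  · obtain ⟨a, ha, rfl⟩ := P.part_surjOn hB
    exact mem_image_of_mem _ ha
  · obtain ⟨a, ha, rfl⟩ := mem_image.1 hB
    exact P.part_mem.2 ha

theorem ext_part {P Q : Finpartition s} (h : ∀ a ∈ s, P.part a = Q.part a) : P = Q := by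
  ext1
  rw [parts_eq_image_part, parts_eq_image_part]
  exact image_congr h

end Finpartition

namespace SimpleGraph

variable {V : Type*} [Fintype V] [DecidableEq V]

theorem image_univ_edgeFinset :
    (univ : Finset (SimpleGraph V)).image (fun G => G.edgeFinset) =
      (⊤ : SimpleGraph V).edgeFinset.powerset := by
  ext t
  simp only [mem_image, mem_univ, true_and, mem_powerset]
  refine ⟨fun ⟨G, hG⟩ => hG ▸ edgeFinset_mono le_top, fun ht => ⟨fromEdgeSet t, ?_⟩⟩
  ext e
  simp only [mem_edgeFinset, edgeSet_fromEdgeSet, Set.mem_sdiff, mem_coe, and_iff_left_iff_imp]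
  exact fun he => by simpa using ht he

theorem prod_one_add_edgeFinset_top_eq_sum {R : Type*} [CommSemiring R] (w : Sym2 V → R) :
    ∏ e ∈ (⊤ : SimpleGraph V).edgeFinset, (1 + w e) =
      ∑ G : SimpleGraph V, ∏ e ∈ G.edgeFinset, w e := by
  rw [prod_one_add, ← image_univ_edgeFinset, sum_image fun G _ H _ => edgeFinset_inj.1]

noncomputable def componentPartition (G : SimpleGraph V) : Finpartition (univ : Finset V) :=
  Finpartition.ofSetoid G.reachableSetoid

theorem mem_componentPartition_part {G : SimpleGraph V} {x y : V} :
    y ∈ (componentPartition G).part x ↔ G.Reachable x y :=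
  Finpartition.mem_part_ofSetoid_iff_rel

theorem componentPartition_eq_iff {G : SimpleGraph V} {σ : Finpartition (univ : Finset V)} :
    componentPartition G = σ ↔ ∀ x y, G.Reachable x y ↔ y ∈ σ.part x := by
  refine ⟨fun h x y => h ▸ mem_componentPartition_part.symm, fun h => ?_⟩
  refine Finpartition.ext_part fun x _ => ?_
  ext y
  rw [mem_componentPartition_part, h]

theorem connected_comap_of_componentPartition_eq {G : SimpleGraph V}
    {σ : Finpartition (univ : Finset V)} (hG : componentPartition G = σ) {B : Finset V}
    (hB : B ∈ σ.parts) : (G.comap (Subtype.val : B → V)).Connected := by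
  obtain ⟨x, hx⟩ := σ.nonempty_of_mem_parts hB
  have hreach : ∀ y, G.Reachable x y ↔ y ∈ B := fun y => by
    rw [componentPartition_eq_iff.1 hG, σ.part_eq_of_mem hB hx]
  refine (connected_iff_exists_forall_reachable _).2 ⟨⟨x, hx⟩, fun ⟨y, hy⟩ => ?_⟩
  obtain ⟨p⟩ := (hreach y).2 hy
  -- `G.induce ↑B` and `G.comap (Subtype.val : B → V)` agree definitionally.
  exact (p.induce (B : Set V) fun z hz => (hreach z).1 (p.takeUntil z hz).reachable).reachable

def glue (σ : Finpartition (univ : Finset V)) (g : ∀ B : σ.parts, SimpleGraph (B : Finset V)) :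
    SimpleGraph V :=
  ⨆ B, (g B).map (Function.Embedding.subtype _)

variable {σ : Finpartition (univ : Finset V)}

theorem glue_adj {g : ∀ B : σ.parts, SimpleGraph (B : Finset V)} {i j : V} :
    (glue σ g).Adj i j ↔ ∃ (B : σ.parts) (hi : i ∈ (B : Finset V)) (hj : j ∈ (B : Finset V)),
      (g B).Adj ⟨i, hi⟩ ⟨j, hj⟩ := by
  simp only [glue, iSup_adj, map_adj, Function.Embedding.subtype_apply]
  constructor
  · rintro ⟨B, ⟨i, hi⟩, ⟨j, hj⟩, h, rfl, rfl⟩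
    exact ⟨B, hi, hj, h⟩
  · rintro ⟨B, hi, hj, h⟩
    exact ⟨B, ⟨i, hi⟩, ⟨j, hj⟩, h, rfl, rfl⟩

theorem edgeFinset_glue (g : ∀ B : σ.parts, SimpleGraph (B : Finset V)) :
    (glue σ g).edgeFinset =
      univ.biUnion fun B => (g B).edgeFinset.map (Function.Embedding.subtype _).sym2Map := by
  rw [← coe_inj, coe_edgeFinset, coe_biUnion, glue, edgeSet_iSup]
  simp only [mem_coe, mem_univ, Set.iUnion_true, coe_map, coe_edgeFinset, edgeSet_map]

theorem prod_edgeFinset_glue {M : Type*} [CommMonoid M]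
    (g : ∀ B : σ.parts, SimpleGraph (B : Finset V)) (w : Sym2 V → M) :
    ∏ e ∈ (glue σ g).edgeFinset, w e = ∏ B, ∏ e ∈ (g B).edgeFinset, w (e.map Subtype.val) := by
  rw [edgeFinset_glue, prod_biUnion]
  · simp only [prod_map, Function.Embedding.sym2Map_apply, Function.Embedding.coe_subtype]
  intro B _ B' _ hne
  refine Finset.disjoint_left.2 fun e he he' => hne ?_
  simp only [mem_map, Function.Embedding.sym2Map_apply, Function.Embedding.coe_subtype] at he he'
  obtain ⟨x, -, rfl⟩ := he
  obtain ⟨y, -, hxy⟩ := he'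
  obtain ⟨v, -, hvx⟩ := Sym2.mem_map.1 (hxy ▸ Sym2.mem_map.2 ⟨_, x.out_fst_mem, rfl⟩)
  exact Subtype.ext (σ.eq_of_mem_parts B.2 B'.2 x.out.1.2 (hvx ▸ v.2))

theorem comap_glue (g : ∀ B : σ.parts, SimpleGraph (B : Finset V)) (B : σ.parts) :
    (glue σ g).comap Subtype.val = g B := by
  ext x y
  rw [comap_adj, glue_adj]
  refine ⟨fun ⟨B', hx, hy, h⟩ => ?_, fun h => ⟨B, x.2, y.2, h⟩⟩
  obtain rfl : B' = B := Subtype.ext (σ.eq_of_mem_parts B'.2 B.2 hx x.2)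
  exact h

theorem glue_comap_of_componentPartition_eq {G : SimpleGraph V} (hG : componentPartition G = σ) :
    glue σ (fun _ => G.comap Subtype.val) = G := by
  ext i j
  rw [glue_adj]
  refine ⟨fun ⟨_, _, _, h⟩ => h, fun h => ?_⟩
  have hj : j ∈ σ.part i := (componentPartition_eq_iff.1 hG i j).1 h.reachable
  exact ⟨⟨σ.part i, σ.part_mem.2 (mem_univ i)⟩, σ.mem_part (mem_univ i), hj, h⟩

theorem componentPartition_glue {g : ∀ B : σ.parts, SimpleGraph (B : Finset V)}
    (hg : ∀ B, (g B).Connected) : componentPartition (glue σ g) = σ := by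
  refine componentPartition_eq_iff.2 fun x y => ⟨fun h => ?_, fun hy => ?_⟩
  · have hpart : σ.part x = σ.part y := by
      replace h := (reachable_iff_reflTransGen _ _).1 h
      induction h with
      | refl => rfl
      | tail _ hadj ih =>
        obtain ⟨B, hi, hj, -⟩ := glue_adj.1 hadj
        rw [ih, σ.part_eq_of_mem B.2 hi, σ.part_eq_of_mem B.2 hj]
    exact hpart ▸ σ.mem_part (mem_univ y)
  · let B : σ.parts := ⟨σ.part x, σ.part_mem.2 (mem_univ x)⟩
    let φ : g B →g glue σ g := ⟨Subtype.val, fun h => glue_adj.2 ⟨B, _, _, h⟩⟩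
    exact ((hg B).preconnected ⟨x, σ.mem_part (mem_univ x)⟩ ⟨y, hy⟩).map φ

theorem sum_filter_componentPartition_eq {R : Type*} [CommSemiring R] (w : Sym2 V → R)
    (σ : Finpartition (univ : Finset V)) :
    ∑ G with componentPartition G = σ, ∏ e ∈ G.edgeFinset, w e =
      ∏ B ∈ σ.parts, ∑ H : SimpleGraph B,
        if H.Connected then ∏ e ∈ H.edgeFinset, w (e.map Subtype.val) else 0 := by
  rw [← prod_coe_sort, Fintype.prod_sum]
  simp_rw [Fintype.prod_ite_zero]
  rw [← sum_filter]
  symm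
  refine sum_nbij' (glue σ) (fun G B => G.comap Subtype.val) ?_ ?_ ?_ ?_ ?_
  · intro g hg
    simpa using componentPartition_glue (mem_filter.1 hg).2
  · intro G hG
    simpa using fun B hB => connected_comap_of_componentPartition_eq (mem_filter.1 hG).2 hB
  · intro g _
    funext B
    exact comap_glue g B
  · intro G hG
    exact glue_comap_of_componentPartition_eq (mem_filter.1 hG).2
  · intro g _
    exact (prod_edgeFinset_glue g w).symm

theorem prod_one_add_edgeFinset_top_eq_sum_finpartition {R : Type*} [CommSemiring R]
    (w : Sym2 V → R) :
    ∏ e ∈ (⊤ : SimpleGraph V).edgeFinset, (1 + w e) =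
      ∑ σ : Finpartition (univ : Finset V), ∏ B ∈ σ.parts, ∑ H : SimpleGraph B,
        if H.Connected then ∏ e ∈ H.edgeFinset, w (e.map Subtype.val) else 0 := by
  rw [prod_one_add_edgeFinset_top_eq_sum, ← sum_fiberwise univ componentPartition]
  exact sum_congr rfl fun σ _ => sum_filter_componentPartition_eq w σ

end SimpleGraph

theorem exclusion_cluster_expansion_general (n : ℕ) (a : Sym2 (Fin n) → ℝ) :
    ∏ e ∈ (⊤ : SimpleGraph (Fin n)).edgeFinset, (1 - a e) =
      ∑ σ : Finpartition (Finset.univ : Finset (Fin n)),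
        ∏ B ∈ σ.parts, clusterValue a B := by
  simp_rw [sub_eq_add_neg]
  exact SimpleGraph.prod_one_add_edgeFinset_top_eq_sum_finpartition (fun e => -a e)

/-- **Cluster (cumulant) expansion of the exclusion indicator**:
`∏_{1 ≤ i < j ≤ n} (1 − a_{ij}) = Σ_{σ partition of {1,…,n}} ∏_{B block of σ} φ_B(a)`. -/
theorem exclusion_cluster_expansion (n : ℕ) (hn : 1 ≤ n) (a : Sym2 (Fin n) → ℝ) :
    ∏ e ∈ (⊤ : SimpleGraph (Fin n)).edgeFinset, (1 - a e) =
      ∑ σ : Finpartition (Finset.univ : Finset (Fin n)),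
        ∏ B ∈ σ.parts, clusterValue a B :=
  exclusion_cluster_expansion_general n a
end

section
/- Let d ≥ 2 be an integer, β > 0, and let φ : ℝ≥0 × 𝕋^d × ℝ^d → ℝ be continuously differentiable in the time and space variables, measurable in all variables, and satisfy the growth bound |φ(t,x,v)| ≤ A·exp(β|v|²/4) for some constant A and all (t,x,v). Assume φ solves the linear Rayleigh–Boltzmann equation pointwise: ∂_t φ(t,x,v) + v·∇_x φ(t,x,v) = ∫_{S^{d−1}} ∫_{ℝ^d} [φ(t,x,v − ⟨v−v_c, ω⟩ω) − φ(t,x,v)] · M_β(v_c) · ⟨ω, v_c − v⟩_+ dv_c dω. Then for every integer n ≥ 1 and every subset ℓ ⊆ {1,…,n}, the function G_n(t, z_1,…,z_n) := (∏_{i=1}^n M_β(v_i)) · (∏_{i ∈ ℓ} φ(t, x_i, v_i)) satisfies, at every point, the limit hierarchy: ∂_t G_n + Σ_{i=1}^n v_i·∇_{x_i} G_n = Σ_{i=1}^n ∫_{S^{d−1}} ∫_{ℝ^d} ⟨ω, v_{n+1} − v_i⟩_+ · [ M_β(v_i') M_β(v_{n+1}') (∏_{j ≤ n, j ≠ i}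 M_β(v_j)) (∏_{j ∈ ℓ, j ≠ i} φ(t,x_j,v_j)) · Φ_i' − M_β(v_{n+1}) G_n(t, z_1,…,z_n) ] dv_{n+1} dω, where (v_i', v_{n+1}') = (v_i − ⟨v_i − v_{n+1}, ω⟩ω, v_{n+1} + ⟨v_i − v_{n+1}, ω⟩ω) are the elastically scattered velocities and Φ_i' := φ(t, x_i, v_i') if i ∈ ℓ and Φ_i' := 1 otherwise. -/
open MeasureTheory
open scoped RealInnerProductSpace

/-- Euclidean `d`-space. -/
noncomputable abbrev Esp (d : ℕ) := EuclideanSpace ℝ (Fin d)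

/-- The Maxwellian `M_β(v) = (β/(2π))^{d/2} exp(−β|v|²/2)`. -/
noncomputable def maxwellian (d : ℕ) (β : ℝ) (v : Esp d) : ℝ :=
  (β / (2 * Real.pi)) ^ ((d : ℝ) / 2) * Real.exp (-(β / 2) * ‖v‖ ^ 2)

/-- The tensorized limit density `G_n(t, z_1,…,z_n) = ∏_i M_β(v_i) · ∏_{i ∈ ℓ} φ(t,x_i,v_i)`,
for a `ℤ^d`-periodic function `φ` on `ℝ × ℝ^d × ℝ^d` (i.e. a function on `ℝ≥0 × 𝕋^d × ℝ^d`). -/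
noncomputable def limitDensity (d : ℕ) (β : ℝ) (φ : ℝ → Esp d → Esp d → ℝ)
    (n : ℕ) (ℓ : Finset (Fin n)) (t : ℝ) (x v : Fin n → Esp d) : ℝ :=
  (∏ i, maxwellian d β (v i)) * ∏ i ∈ ℓ, φ t (x i) (v i)

/-! By the product rule, `(∂_t + Σ v_i·∇_{x_i}) G_n` is the sum over tagged `i` of `G_n` with
the factor `φ(t,x_i,v_i)` replaced by `(∂_t + v_i·∇_x) φ(t,x_i,v_i)`, which by the equation for
`φ` is the Rayleigh–Boltzmann operator applied to `φ(t,x_i,·)`. On the collision side, invariance of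
`M_β(v_i) M_β(v_{n+1})` under elastic scattering makes the `i`-th term vanish for untagged `i`
and reduce to exactly that Rayleigh–Boltzmann term for tagged `i`. -/

noncomputable def rayleighBoltzmann (d : ℕ) (β : ℝ) (f : Esp d → ℝ) (v : Esp d) : ℝ :=
  ∫ ω : Metric.sphere (0 : Esp d) 1, ∫ vc : Esp d,
    (f (v - ⟪v - vc, (ω : Esp d)⟫ • (ω : Esp d)) - f v) *
      maxwellian d β vc * max ⟪(ω : Esp d), vc - v⟫ 0
    ∂volume ∂((volume : Measure (Esp d)).toSphere)

theorem norm_sq_add_norm_sq_collision {E : Type*} [NormedAddCommGroup E] [InnerProductSpace ℝ E]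
    (v w ω : E) (hω : ‖ω‖ = 1) :
    ‖v - ⟪v - w, ω⟫ • ω‖ ^ 2 + ‖w + ⟪v - w, ω⟫ • ω‖ ^ 2 = ‖v‖ ^ 2 + ‖w‖ ^ 2 := by
  have hsmul : ‖⟪v - w, ω⟫ • ω‖ ^ 2 = ⟪v - w, ω⟫ ^ 2 := by
    rw [norm_smul, mul_pow, hω, Real.norm_eq_abs, sq_abs, one_pow, mul_one]
  rw [norm_sub_sq_real, norm_add_sq_real, real_inner_smul_right, real_inner_smul_right, hsmul,
    inner_sub_left]
  ring

theorem maxwellian_mul_maxwellian_collision (d : ℕ) (β : ℝ) (v w ω : Esp d) (hω : ‖ω‖ = 1) :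
    maxwellian d β (v - ⟪v - w, ω⟫ • ω) * maxwellian d β (w + ⟪v - w, ω⟫ • ω) =
      maxwellian d β v * maxwellian d β w := by
  have hexp : Real.exp (-(β / 2) * ‖v - ⟪v - w, ω⟫ • ω‖ ^ 2) *
      Real.exp (-(β / 2) * ‖w + ⟪v - w, ω⟫ • ω‖ ^ 2) =
      Real.exp (-(β / 2) * ‖v‖ ^ 2) * Real.exp (-(β / 2) * ‖w‖ ^ 2) := by
    rw [← Real.exp_add, ← Real.exp_add]
    congr 1
    linear_combination (-(β / 2)) * norm_sq_add_norm_sq_collision v w ω hω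
  simp only [maxwellian]
  linear_combination ((β / (2 * Real.pi)) ^ ((d : ℝ) / 2)) ^ 2 * hexp

section limitDensity

variable {d : ℕ} {β : ℝ} {φ : ℝ → Esp d → Esp d → ℝ} {n : ℕ} {ℓ : Finset (Fin n)} {t : ℝ}
  {x v : Fin n → Esp d}

theorem limitDensity_eq_mul_prod_erase {i : Fin n} (hi : i ∈ ℓ) :
    limitDensity d β φ n ℓ t x v =
      (∏ j, maxwellian d β (v j)) * (∏ j ∈ ℓ.erase i, φ t (x j) (v j)) * φ t (x i) (v i) := by
  rw [limitDensity, ← Finset.mul_prod_erase ℓ _ hi]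
  ring

theorem hasDerivAt_limitDensity
    (hφ : ∀ i ∈ ℓ, DifferentiableAt ℝ (fun s => φ s (x i) (v i)) t) :
    HasDerivAt (fun s => limitDensity d β φ n ℓ s x v)
      ((∏ j, maxwellian d β (v j)) *
        ∑ i ∈ ℓ, (∏ j ∈ ℓ.erase i, φ t (x j) (v j)) * deriv (fun s => φ s (x i) (v i)) t) t :=
  (HasDerivAt.fun_finsetProd fun i hi => (hφ i hi).hasDerivAt).const_mul _

theorem fderiv_limitDensity_update (i : Fin n) :
    fderiv ℝ (fun y => limitDensity d β φ n ℓ t (Function.update x i y) v) (x i) (v i) =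
      if i ∈ ℓ then (∏ j, maxwellian d β (v j)) * (∏ j ∈ ℓ.erase i, φ t (x j) (v j)) *
        fderiv ℝ (fun y => φ t y (v i)) (x i) (v i)
      else 0 := by
  split_ifs with hi
  · have hfun : (fun y => limitDensity d β φ n ℓ t (Function.update x i y) v) =
        ((∏ j, maxwellian d β (v j)) * ∏ j ∈ ℓ.erase i, φ t (x j) (v j)) •
          fun y => φ t y (v i) := by
      ext y
      rw [limitDensity_eq_mul_prod_erase hi, Function.update_self]
      simp only [Pi.smul_apply, smul_eq_mul]
      congr 2
      exact Finset.prod_congr rfl fun j hj => by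
        rw [Function.update_of_ne (Finset.ne_of_mem_erase hj)]
    rw [hfun, fderiv_const_smul_field]
    rfl
  · have hfun : (fun y => limitDensity d β φ n ℓ t (Function.update x i y) v) =
        fun _ => limitDensity d β φ n ℓ t x v := by
      ext y
      refine congrArg _ (Finset.prod_congr rfl fun j hj => ?_)
      rw [Function.update_of_ne (ne_of_mem_of_not_mem hj hi)]
    rw [hfun, fderiv_fun_const]
    rfl

theorem integral_hierarchy_collision (i : Fin n) :
    ∫ ω : Metric.sphere (0 : Esp d) 1, ∫ w : Esp d,
      max ⟪(ω : Esp d), w - v i⟫ 0 *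
        (maxwellian d β (v i - ⟪v i - w, (ω : Esp d)⟫ • (ω : Esp d)) *
          maxwellian d β (w + ⟪v i - w, (ω : Esp d)⟫ • (ω : Esp d)) *
          (∏ j ∈ Finset.univ.erase i, maxwellian d β (v j)) *
          (∏ j ∈ ℓ.erase i, φ t (x j) (v j)) *
          (if i ∈ ℓ then φ t (x i) (v i - ⟪v i - w, (ω : Esp d)⟫ • (ω : Esp d)) else 1) -
        maxwellian d β w * limitDensity d β φ n ℓ t x v)
      ∂volume ∂((volume : Measure (Esp d)).toSphere) =
    if i ∈ ℓ then (∏ j, maxwellian d β (v j)) * (∏ j ∈ ℓ.erase i, φ t (x j) (v j)) *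
      rayleighBoltzmann d β (φ t (x i)) (v i)
    else 0 := by
  have hsplit := Finset.mul_prod_erase Finset.univ (fun j => maxwellian d β (v j))
    (Finset.mem_univ i)
  split_ifs with hi
  · rw [rayleighBoltzmann, ← integral_const_mul]
    refine integral_congr_ae (ae_of_all _ fun ω => ?_)
    dsimp only
    rw [← integral_const_mul]
    refine integral_congr_ae (ae_of_all _ fun w => ?_)
    dsimp only
    rw [maxwellian_mul_maxwellian_collision d β (v i) w ω (norm_eq_of_mem_sphere ω),
      limitDensity_eq_mul_prod_erase hi, ← hsplit]
    ring
  · refine integral_eq_zero_of_ae (ae_of_all _ fun ω => integral_eq_zero_of_ae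
      (ae_of_all _ fun w => ?_))
    simp only [Pi.zero_apply]
    rw [maxwellian_mul_maxwellian_collision d β (v i) w ω (norm_eq_of_mem_sphere ω),
      Finset.erase_eq_of_notMem hi, limitDensity, ← hsplit]
    ring

end limitDensity

theorem limit_hierarchy_general (d : ℕ) (β : ℝ)
    (φ : ℝ → Esp d → Esp d → ℝ)
    (hreg : ∀ v : Esp d, ContDiff ℝ 1 (fun p : ℝ × Esp d => φ p.1 p.2 v))
    (heq : ∀ t : ℝ, 0 ≤ t → ∀ x v : Esp d,
      deriv (fun s => φ s x v) t + fderiv ℝ (fun y => φ t y v) x v =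
        ∫ ω : Metric.sphere (0 : Esp d) 1, ∫ vc : Esp d,
          (φ t x (v - ⟪v - vc, (ω : Esp d)⟫ • (ω : Esp d)) - φ t x v) *
            maxwellian d β vc * max ⟪(ω : Esp d), vc - v⟫ 0
          ∂volume ∂((volume : Measure (Esp d)).toSphere)) :
    ∀ n : ℕ, 1 ≤ n → ∀ ℓ : Finset (Fin n), ∀ t : ℝ, 0 ≤ t → ∀ x v : Fin n → Esp d,
      deriv (fun s => limitDensity d β φ n ℓ s x v) t +
        ∑ i, fderiv ℝ (fun y => limitDensity d β φ n ℓ t (Function.update x i y) v)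
          (x i) (v i) =
      ∑ i, ∫ ω : Metric.sphere (0 : Esp d) 1, ∫ w : Esp d,
        max ⟪(ω : Esp d), w - v i⟫ 0 *
          (maxwellian d β (v i - ⟪v i - w, (ω : Esp d)⟫ • (ω : Esp d)) *
            maxwellian d β (w + ⟪v i - w, (ω : Esp d)⟫ • (ω : Esp d)) *
            (∏ j ∈ Finset.univ.erase i, maxwellian d β (v j)) *
            (∏ j ∈ ℓ.erase i, φ t (x j) (v j)) *
            (if i ∈ ℓ then φ t (x i) (v i - ⟪v i - w, (ω : Esp d)⟫ • (ω : Esp d)) else 1) -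
          maxwellian d β w * limitDensity d β φ n ℓ t x v)
        ∂volume ∂((volume : Measure (Esp d)).toSphere) := by
  intro n _ ℓ t ht x v
  have hdt : ∀ i ∈ ℓ, DifferentiableAt ℝ (fun s => φ s (x i) (v i)) t := fun i _ =>
    DifferentiableAt.comp (g := fun p : ℝ × Esp d => φ p.1 p.2 (v i)) (f := fun s => (s, x i)) t
      ((hreg (v i)).differentiable one_ne_zero (t, x i))
      (differentiableAt_id.prodMk (differentiableAt_const _))
  simp only [(hasDerivAt_limitDensity hdt).deriv, fderiv_limitDensity_update,
    integral_hierarchy_collision, Finset.sum_ite_mem, Finset.univ_inter, Finset.mul_sum,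
    ← Finset.sum_add_distrib]
  refine Finset.sum_congr rfl fun i _ => ?_
  rw [rayleighBoltzmann, ← heq t ht]
  ring

/-- **The tensorized Rayleigh–Boltzmann solutions satisfy the limit hierarchy.**
If `φ` (periodic in `x`, `C¹` in `(t,x)`, measurable, with Gaussian-controlled growth)
solves the linear Rayleigh–Boltzmann equation pointwise, then for every `n ≥ 1` and every
set `ℓ ⊆ {1,…,n}` of tags, `G_n := M_β^{⊗n} φ^{⊗ℓ}` satisfies the limit BBGKY hierarchy
in which only collisions with an added equilibrium particle appear. -/
theorem limit_hierarchy (d : ℕ) (hd : 2 ≤ d) (β : ℝ) (hβ : 0 < β)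
    (φ : ℝ → Esp d → Esp d → ℝ) (A : ℝ)
    (hreg : ∀ v : Esp d, ContDiff ℝ 1 (fun p : ℝ × Esp d => φ p.1 p.2 v))
    (hmeas : Measurable fun p : ℝ × Esp d × Esp d => φ p.1 p.2.1 p.2.2)
    (hper : ∀ (t : ℝ) (x v : Esp d) (m : Fin d → ℤ),
      φ t (x + (show Esp d from WithLp.toLp 2 fun i => (m i : ℝ))) v = φ t x v)
    (hgrowth : ∀ (t : ℝ) (x v : Esp d), |φ t x v| ≤ A * Real.exp (β * ‖v‖ ^ 2 / 4))
    (heq : ∀ t : ℝ, 0 ≤ t → ∀ x v : Esp d,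
      deriv (fun s => φ s x v) t + fderiv ℝ (fun y => φ t y v) x v =
        ∫ ω : Metric.sphere (0 : Esp d) 1, ∫ vc : Esp d,
          (φ t x (v - ⟪v - vc, (ω : Esp d)⟫ • (ω : Esp d)) - φ t x v) *
            maxwellian d β vc * max ⟪(ω : Esp d), vc - v⟫ 0
          ∂volume ∂((volume : Measure (Esp d)).toSphere)) :
    ∀ n : ℕ, 1 ≤ n → ∀ ℓ : Finset (Fin n), ∀ t : ℝ, 0 ≤ t → ∀ x v : Fin n → Esp d,
      deriv (fun s => limitDensity d β φ n ℓ s x v) t +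
        ∑ i, fderiv ℝ (fun y => limitDensity d β φ n ℓ t (Function.update x i y) v)
          (x i) (v i) =
      ∑ i, ∫ ω : Metric.sphere (0 : Esp d) 1, ∫ w : Esp d,
        max ⟪(ω : Esp d), w - v i⟫ 0 *
          (maxwellian d β (v i - ⟪v i - w, (ω : Esp d)⟫ • (ω : Esp d)) *
            maxwellian d β (w + ⟪v i - w, (ω : Esp d)⟫ • (ω : Esp d)) *
            (∏ j ∈ Finset.univ.erase i, maxwellian d β (v j)) *
            (∏ j ∈ ℓ.erase i, φ t (x j) (v j)) *
            (if i ∈ ℓ then φ t (x i) (v i - ⟪v i - w, (ω : Esp d)⟫ • (ω : Esp d)) else 1) -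
          maxwellian d β w * limitDensity d β φ n ℓ t x v)
        ∂volume ∂((volume : Measure (Esp d)).toSphere) :=
  limit_hierarchy_general d β φ hreg heq
end
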